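/- For every integer n ≥ 2 and every real r > 0, the integral ∫₀^∞ e^{-r²/(5t)} e^{-t/2} t^{-n} dt is at most C_n · r^{2-2n}, where C_n = 5^{n-1} Γ(n-1) (i.e. 5^{n-1}(n-2)!). In particular the integral is finite and bounded by a constant times r^{2-2n}. -/

import Mathlib

/-!
Substituting `t = r² / u` turns the integral into
`r^{2-2n} ∫₀^∞ u^{n-2} e^{-u/5} e^{-r²/(2u)} du`. Dropping the factor `e^{-r²/(2u)} ≤ 1` leaves a
Gamma integral, `∫₀^∞ u^{n-2} e^{-u/5} du = 5^{n-1} Γ(n-1)`.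
-/

open MeasureTheory Set Real

theorem image_const_div_Ioi_zero {c : ℝ} (hc : 0 < c) : (c / ·) '' Ioi 0 = Ioi (0 : ℝ) := by
  ext t
  refine ⟨fun ⟨u, hu, htu⟩ => htu ▸ div_pos hc hu, fun ht => ⟨c / t, div_pos hc ht, ?_⟩⟩
  exact div_div_cancel₀ hc.ne'

theorem integral_comp_const_div_Ioi {E : Type*} [NormedAddCommGroup E] [NormedSpace ℝ E]
    (g : ℝ → E) {c : ℝ} (hc : 0 < c) :
    ∫ u in Ioi 0, (c / u ^ 2) • g (c / u) = ∫ t in Ioi 0, g t := by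
  have hderiv : ∀ u ∈ Ioi (0 : ℝ), HasDerivWithinAt (c / ·) (-(c / u ^ 2)) (Ioi 0) u := by
    intro u hu
    simpa [div_eq_mul_inv, neg_div] using
      ((hasDerivAt_inv (ne_of_gt hu)).const_mul c).hasDerivWithinAt
  have hinj : InjOn (c / ·) (Ioi (0 : ℝ)) := fun u _ v _ h => by
    simpa [div_div_cancel₀ hc.ne'] using congrArg (c / ·) h
  have hsubst := integral_image_eq_integral_abs_deriv_smul measurableSet_Ioi hderiv hinj g
  rw [image_const_div_Ioi_zero hc] at hsubst
  rw [hsubst]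
  refine setIntegral_congr_fun measurableSet_Ioi fun u hu => ?_
  rw [abs_neg, abs_of_pos (div_pos hc (pow_pos hu 2))]

theorem setIntegral_mul_le_setIntegral_of_le_one {α : Type*} [MeasurableSpace α] {μ : Measure α}
    {s : Set α} (hs : MeasurableSet s) {f g : α → ℝ} (hf : IntegrableOn f s μ)
    (hf0 : ∀ x ∈ s, 0 ≤ f x) (hg0 : ∀ x ∈ s, 0 ≤ g x) (hg1 : ∀ x ∈ s, g x ≤ 1) :
    ∫ x in s, f x * g x ∂μ ≤ ∫ x in s, f x ∂μ := by
  refine integral_mono_of_nonneg ?_ hf ?_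
  · exact (ae_restrict_iff' hs).2 (ae_of_all _ fun x hx => mul_nonneg (hf0 x hx) (hg0 x hx))
  · refine (ae_restrict_iff' hs).2 (ae_of_all _ fun x hx => ?_)
    exact mul_le_of_le_one_right (hf0 x hx) (hg1 x hx)

theorem integral_rpow_natCast_mul_exp_neg_mul_Ioi (k : ℕ) {c : ℝ} (hc : 0 < c) :
    ∫ u in Ioi 0, u ^ (k : ℝ) * exp (-(c * u)) = (1 / c) ^ (k + 1) * k.factorial := by
  have h := integral_rpow_mul_exp_neg_mul_Ioi (by positivity : (0 : ℝ) < k + 1) hc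
  rwa [add_sub_cancel_right, Gamma_nat_eq_factorial, ← Nat.cast_add_one, rpow_natCast] at h

theorem const_div_sq_mul_integrand_comp_const_div {r u : ℝ} (hr : 0 < r) (hu : 0 < u) (s : ℝ) :
    r ^ 2 / u ^ 2 * (exp (-(r ^ 2) / (5 * (r ^ 2 / u))) * exp (-(r ^ 2 / u) / 2) *
        (r ^ 2 / u) ^ (-s))
      = r ^ (2 - 2 * s) * (u ^ (s - 2) * exp (-(1 / 5 * u)) * exp (-(r ^ 2 / u) / 2)) := by
  have hexp : -(r ^ 2) / (5 * (r ^ 2 / u)) = -(1 / 5 * u) := by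
    field_simp
  have hpow : r ^ 2 / u ^ 2 * (r ^ 2 / u) ^ (-s) = r ^ (2 - 2 * s) * u ^ (s - 2) := by
    rw [div_rpow (sq_nonneg r) hu.le, rpow_neg hu.le, div_inv_eq_mul, rpow_sub hu, rpow_two,
      show 2 - 2 * s = 2 + 2 * -s by ring, rpow_add hr, rpow_mul hr.le, rpow_two]
    field_simp
  rw [hexp]
  linear_combination exp (-(1 / 5 * u)) * exp (-(r ^ 2 / u) / 2) * hpow

/-- For `n ≥ 2` and `r > 0`, `∫₀^∞ e^{-r²/(5t)} e^{-t/2} t^{-n} dt ≤ 5^{n-1}(n-2)! · r^{2-2n}`. -/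
theorem stmt2 (n : ℕ) (hn : 2 ≤ n) (r : ℝ) (hr : 0 < r) :
    (∫ t in Set.Ioi (0 : ℝ),
        Real.exp (-(r ^ 2) / (5 * t)) * Real.exp (-t / 2) * t ^ (-(n : ℝ)))
      ≤ (5 : ℝ) ^ (n - 1) * ((n - 2).factorial : ℝ) * r ^ (2 - 2 * (n : ℝ)) := by
  have hr2 : 0 < r ^ 2 := by positivity
  have hgamma := integral_rpow_natCast_mul_exp_neg_mul_Ioi (n - 2) (by norm_num : (0 : ℝ) < 1 / 5)
  rw [← integral_comp_const_div_Ioi _ hr2]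
  simp only [smul_eq_mul]
  rw [setIntegral_congr_fun measurableSet_Ioi fun u hu =>
      const_div_sq_mul_integrand_comp_const_div hr hu (n : ℝ),
    show (n : ℝ) - 2 = (n - 2 : ℕ) by push_cast [Nat.cast_sub hn]; ring, integral_const_mul]
  calc r ^ (2 - 2 * (n : ℝ)) * ∫ u in Ioi 0,
        u ^ ((n - 2 : ℕ) : ℝ) * exp (-(1 / 5 * u)) * exp (-(r ^ 2 / u) / 2)
      ≤ r ^ (2 - 2 * (n : ℝ)) * ∫ u in Ioi 0, u ^ ((n - 2 : ℕ) : ℝ) * exp (-(1 / 5 * u)) := by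
        refine mul_le_mul_of_nonneg_left ?_ (by positivity)
        refine setIntegral_mul_le_setIntegral_of_le_one measurableSet_Ioi
          (.of_integral_ne_zero (by rw [hgamma]; positivity))
          (fun u (hu : 0 < u) => by positivity) (fun u _ => (exp_pos _).le) fun u hu => ?_
        exact exp_le_one_iff.2 (by have := div_pos hr2 hu; linarith)
    _ = (5 : ℝ) ^ (n - 1) * ((n - 2).factorial : ℝ) * r ^ (2 - 2 * (n : ℝ)) := by
        rw [hgamma, one_div_one_div, show n - 2 + 1 = n - 1 by omega]
        ring
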